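/- Let l ≥ 1 and ν ≥ 1 be integers, let c_1, …, c_{ν−1} be real constants, let η > 0 and q ∈ (1,2), and define C(s) = ((sᵀs)^{1−1/q} − η)/((sᵀs)^{1−1/q} + η) for s ∈ ℝ^l. For a sequence f : ℕ → ℝ^l let (Δf)(k) = f(k+1) − f(k) and let Δ^μ denote the μ-fold iterate (Δ^0 f = f). Let y, y^d, F, F̂, v : ℕ → ℝ^l be sequences, set e_k := y_k − y^d_k and s_k := (Δ^{ν−1}e)(k) + Σ_{i=1}^{ν−1} c_i (Δ^{ν−1−i}e)(k). Suppose the ultra-local model (Δ^ν y)(k) = F_k + v_k holds for all k, and that v satisfies the control law v_k = (Δ^ν y^d)(k) − (2η/((s_kᵀs_k)^{1−1/q} + η))·s_k − F̂_k − Σ_{i=1}^{ν−1} c_i (Δ^{ν−i}e)(k). Then for every k ∈ ℕ: s_{k+1} = C(s_k)·s_k − (F̂_k − F_k). -/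
import Mathlib


open scoped InnerProductSpace

/-- Forward finite difference of a sequence. -/
noncomputable def fdiff {l : ℕ} (f : ℕ → EuclideanSpace ℝ (Fin l)) : ℕ → EuclideanSpace ℝ (Fin l) :=
  fun k => f (k + 1) - f k

/-- The control gain function C of Lemma 2. -/
noncomputable def Cfun (l : ℕ) (η q : ℝ) (s : EuclideanSpace ℝ (Fin l)) : ℝ :=
  (⟪s, s⟫_ℝ ^ (1 - 1 / q) - η) / (⟪s, s⟫_ℝ ^ (1 - 1 / q) + η)

/-- The sliding variable s_k = e_k^{(ν-1)} + Σ_{i=1}^{ν-1} c_i e_k^{(ν-1-i)}. -/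
noncomputable def slide (l ν : ℕ) (c : ℕ → ℝ) (e : ℕ → EuclideanSpace ℝ (Fin l)) :
    ℕ → EuclideanSpace ℝ (Fin l) :=
  fun k => fdiff^[ν - 1] e k + ∑ i ∈ Finset.Icc 1 (ν - 1), c i • fdiff^[ν - 1 - i] e k

lemma fdiff_iter_sub {l : ℕ} (f g : ℕ → EuclideanSpace ℝ (Fin l)) (μ : ℕ) :
    fdiff^[μ] (f - g) = fdiff^[μ] f - fdiff^[μ] g := by
  induction μ with
  | zero => simp
  | succ n ih =>
    rw [Function.iterate_succ']
    funext k
    simp [Function.comp_apply, ih, fdiff]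
    abel

lemma fdiff_iter_succ_apply {l : ℕ} (f : ℕ → EuclideanSpace ℝ (Fin l)) (μ k : ℕ) :
    fdiff^[μ] f (k + 1) = fdiff^[μ] f k + fdiff^[μ + 1] f k := by
  rw [Function.iterate_succ']
  simp [Function.comp_apply, fdiff]

/-- Closed-loop error identity (eq. (55)): under the model-free control law (eq. (51)),
the sliding variable satisfies s_{k+1} = C(s_k) s_k - (F̂_k - F_k). -/
theorem stmt_14 (l ν : ℕ) (hl : 1 ≤ l) (hν : 1 ≤ ν) (c : ℕ → ℝ)
    (η q : ℝ) (hη : 0 < η) (hq : q ∈ Set.Ioo (1:ℝ) 2)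
    (y yd F Fhat v : ℕ → EuclideanSpace ℝ (Fin l))
    (e : ℕ → EuclideanSpace ℝ (Fin l)) (he : ∀ k, e k = y k - yd k)
    (s : ℕ → EuclideanSpace ℝ (Fin l)) (hs : s = slide l ν c e)
    (hulm : ∀ k, fdiff^[ν] y k = F k + v k)
    (hctrl : ∀ k, v k = fdiff^[ν] yd k
      - (2 * η / (⟪s k, s k⟫_ℝ ^ (1 - 1 / q) + η)) • s k
      - Fhat k
      - ∑ i ∈ Finset.Icc 1 (ν - 1), c i • fdiff^[ν - i] e k) :
    ∀ k, s (k + 1) = Cfun l η q (s k) • s k - (Fhat k - F k) := by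
  intro k
  have hef : e = y - yd := funext fun k => he k
  -- positivity of the denominator
  set X : ℝ := ⟪s k, s k⟫_ℝ ^ (1 - 1 / q) with hX
  have hX0 : 0 ≤ X := Real.rpow_nonneg real_inner_self_nonneg _
  have hD : X + η ≠ 0 := by positivity
  -- the error dynamics
  have hee : fdiff^[ν] e k = F k + v k - fdiff^[ν] yd k := by
    rw [hef, fdiff_iter_sub, Pi.sub_apply, hulm k]
  -- step identity for s
  have hstep : s (k + 1) = s k + fdiff^[ν] e k
      + ∑ i ∈ Finset.Icc 1 (ν - 1), c i • fdiff^[ν - i] e k := by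
    rw [hs]
    simp only [slide]
    have h1 : fdiff^[ν - 1] e (k + 1) = fdiff^[ν - 1] e k + fdiff^[ν] e k := by
      have := fdiff_iter_succ_apply e (ν - 1) k
      rwa [Nat.sub_add_cancel hν] at this
    have h2 : ∀ i ∈ Finset.Icc 1 (ν - 1),
        c i • fdiff^[ν - 1 - i] e (k + 1)
          = c i • fdiff^[ν - 1 - i] e k + c i • fdiff^[ν - i] e k := by
      intro i hi
      simp only [Finset.mem_Icc] at hi
      have := fdiff_iter_succ_apply e (ν - 1 - i) k
      have hni : ν - 1 - i + 1 = ν - i := by omega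
      rw [hni] at this
      rw [this, smul_add]
    rw [h1, Finset.sum_congr rfl h2, Finset.sum_add_distrib]
    abel
  rw [hstep, hee, hctrl k]
  have hC : Cfun l η q (s k) = 1 - 2 * η / (X + η) := by
    rw [Cfun, ← hX]
    field_simp
    ring
  rw [hC, ← hX, sub_smul, one_smul]
  abel
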